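/- Let f : ℂ → ℂ be holomorphic on the open unit disk, continuous on the closed unit disk, and suppose conj(ζ)·f(ζ) is real for every ζ with |ζ| = 1. Then there exist a ∈ ℂ and b ∈ ℝ such that f(ζ) = a + b·ζ + conj(a)·ζ² for every ζ in the closed unit disk. In particular, the space of such f is a real vector space of dimension 3. -/

import Mathlib

open Metric Complex Set Topology Bornology ComplexConjugate

/-! With `a = f 0`, the function `h ζ = f ζ - a - conj a * ζ ^ 2` vanishes at `0`, so
`g = dslope h 0 = h ζ / ζ` is holomorphic on the disk. On the unit circle `g ζ = conj ζ * h ζ`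
differs from `conj ζ * f ζ` by `a * conj ζ + conj (a * conj ζ)`, so `g` is real there. The
maximum principle for `exp (± I * g)` makes `Im g` vanish on the whole disk, and by the open
mapping theorem `g` is then a real constant `b`, i.e. `h ζ = b * ζ`. -/

section MaximumPrinciple

variable {E : Type*} [NormedAddCommGroup E] [NormedSpace ℂ E] [Nontrivial E] {U : Set E}
  {g : E → ℂ}

theorem DiffContOnCl.re_le_of_forall_mem_frontier_re_le (hU : IsBounded U)
    (hg : DiffContOnCl ℂ g U) {C : ℝ} (hC : ∀ z ∈ frontier U, (g z).re ≤ C) {z : E}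
    (hz : z ∈ closure U) : (g z).re ≤ C := by
  have hexp : DiffContOnCl ℂ (fun w => exp (g w)) U := ⟨hg.1.cexp, hg.2.cexp⟩
  rw [← Real.exp_le_exp, ← norm_exp]
  refine norm_le_of_forall_mem_frontier_norm_le hU hexp (fun w hw => ?_) hz
  rw [norm_exp, Real.exp_le_exp]
  exact hC w hw

theorem DiffContOnCl.im_eq_zero_of_forall_mem_frontier (hU : IsBounded U)
    (hg : DiffContOnCl ℂ g U) (hfr : ∀ z ∈ frontier U, (g z).im = 0) {z : E}
    (hz : z ∈ closure U) : (g z).im = 0 := by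
  have hle := (hg.const_smul (-I)).re_le_of_forall_mem_frontier_re_le hU (C := 0)
    (fun w hw => by simp [hfr w hw]) hz
  have hge := (hg.const_smul I).re_le_of_forall_mem_frontier_re_le hU (C := 0)
    (fun w hw => by simp [hfr w hw]) hz
  simp only [Pi.smul_apply, smul_eq_mul, mul_re, neg_re, I_re, neg_im, I_im] at hle hge
  linarith

end MaximumPrinciple

theorem DifferentiableOn.exists_real_eqOn_const_of_im_eq_zero {U : Set ℂ} {g : ℂ → ℂ}
    (hg : DifferentiableOn ℂ g U) (hUo : IsOpen U) (hUc : IsPreconnected U)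
    (him : ∀ z ∈ U, (g z).im = 0) : ∃ c : ℝ, EqOn g (fun _ => (c : ℂ)) U := by
  rcases U.eq_empty_or_nonempty with rfl | ⟨z₀, hz₀⟩
  · exact ⟨0, eqOn_empty _ _⟩
  rcases (hg.analyticOnNhd hUo).is_constant_or_isOpen hUc with ⟨w, hw⟩ | hopen
  · refine ⟨w.re, fun z hz => ?_⟩
    rw [hw z hz, ← hw z₀ hz₀]
    exact ext rfl (by simp [him z₀ hz₀])
  · have himage : g '' U ⊆ interior (im ⁻¹' {0}) :=
      interior_maximal (image_subset_iff.2 him) (hopen U subset_rfl hUo)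
    rw [interior_preimage_im, interior_singleton, preimage_empty] at himage
    exact (himage (mem_image_of_mem g hz₀)).elim

theorem DiffContOnCl.exists_real_eqOn_const_of_im_eq_zero_on_frontier {U : Set ℂ} {g : ℂ → ℂ}
    (hg : DiffContOnCl ℂ g U) (hU : IsBounded U) (hUo : IsOpen U) (hUc : IsPreconnected U)
    (hfr : ∀ z ∈ frontier U, (g z).im = 0) : ∃ c : ℝ, EqOn g (fun _ => (c : ℂ)) (closure U) := by
  obtain ⟨c, hc⟩ := hg.differentiableOn.exists_real_eqOn_const_of_im_eq_zero hUo hUc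
    fun z hz => hg.im_eq_zero_of_forall_mem_frontier hU hfr (subset_closure hz)
  exact ⟨c, hc.of_subset_closure hg.continuousOn continuousOn_const subset_closure subset_rfl⟩

theorem DiffContOnCl.dslope {E : Type*} [NormedAddCommGroup E] [NormedSpace ℂ E]
    [CompleteSpace E] {U : Set ℂ} {f : ℂ → E} {a : ℂ} (hf : DiffContOnCl ℂ f U) (ha : U ∈ 𝓝 a) :
    DiffContOnCl ℂ (_root_.dslope f a) U := by
  have hd : DifferentiableOn ℂ (_root_.dslope f a) U := (differentiableOn_dslope ha).2 hf.1
  refine ⟨hd, fun z hz => ?_⟩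
  rcases eq_or_ne z a with rfl | hza
  · exact (hd.differentiableAt ha).continuousAt.continuousWithinAt
  · exact (continuousWithinAt_dslope_of_ne hza).2 (hf.2 z hz)

theorem im_conj_mul_sub_quadratic_of_norm_eq_one {ζ : ℂ} (hζ : ‖ζ‖ = 1) (w a : ℂ) :
    (conj ζ * (w - a - conj a * ζ ^ 2)).im = (conj ζ * w).im := by
  have hζζ : conj ζ * ζ = 1 := by
    rw [← normSq_eq_conj_mul_self, normSq_eq_norm_sq, hζ]; norm_num
  have hexpand :
      conj ζ * (w - a - conj a * ζ ^ 2) = conj ζ * w - (a * conj ζ + conj (a * conj ζ)) := by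
    simp only [map_mul, conj_conj]
    linear_combination (-(conj a) * ζ) * hζζ
  rw [hexpand, sub_im, add_conj, ofReal_im, sub_zero]

/-- If `f : ℂ → ℂ` is holomorphic on the open unit disk, continuous on the closed
unit disk, and `conj ζ * f ζ` is real for every `ζ` on the boundary circle, then
`f ζ = a + b ζ + conj a ζ²` for some `a ∈ ℂ` and `b ∈ ℝ`. -/
theorem holomorphic_disk_real_twisted_boundary
    (f : ℂ → ℂ)
    (hdiff : DifferentiableOn ℂ f (Metric.ball (0 : ℂ) 1))
    (hcont : ContinuousOn f (Metric.closedBall (0 : ℂ) 1))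
    (hbd : ∀ ζ : ℂ, ‖ζ‖ = 1 → ((starRingEnd ℂ) ζ * f ζ).im = 0) :
    ∃ (a : ℂ) (b : ℝ), ∀ ζ ∈ Metric.closedBall (0 : ℂ) 1,
      f ζ = a + (b : ℂ) * ζ + (starRingEnd ℂ) a * ζ ^ 2 := by
  set a := f 0
  set h : ℂ → ℂ := fun ζ => f ζ - a - conj a * ζ ^ 2
  have hquad : Differentiable ℂ fun ζ : ℂ => conj a * ζ ^ 2 := by fun_prop
  have hh : DiffContOnCl ℂ h (ball 0 1) :=
    ((DiffContOnCl.mk_ball hdiff hcont).sub_const a).sub hquad.diffContOnCl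
  have h0 : h 0 = 0 := by simp [h, a]
  have hfr : ∀ ζ ∈ frontier (ball (0 : ℂ) 1), (dslope h 0 ζ).im = 0 := by
    intro ζ hζ
    rw [frontier_ball 0 one_ne_zero, mem_sphere_zero_iff_norm] at hζ
    have hζ0 : ζ ≠ 0 := norm_ne_zero_iff.1 (by rw [hζ]; exact one_ne_zero)
    rw [dslope_of_ne _ hζ0, slope_def_field, h0, sub_zero, sub_zero, div_eq_inv_mul,
      inv_eq_conj hζ]
    exact (im_conj_mul_sub_quadratic_of_norm_eq_one hζ _ _).trans (hbd ζ hζ)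
  obtain ⟨b, hb⟩ :=
    (hh.dslope (ball_mem_nhds 0 one_pos)).exists_real_eqOn_const_of_im_eq_zero_on_frontier
      isBounded_ball isOpen_ball (convex_ball 0 1).isPreconnected hfr
  refine ⟨a, b, fun ζ hζ => ?_⟩
  have hfactor := sub_smul_dslope h 0 ζ
  rw [closure_ball 0 one_ne_zero] at hb
  rw [hb hζ, h0, sub_zero, sub_zero, smul_eq_mul] at hfactor
  linear_combination -hfactor
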